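/- arXiv:2408.13682 — 3 statements merged into one kernel-verified Lean document; each statement's English description precedes it below -/
import Mathlib

section
/- For positive integers M, N and complex numbers z_1, …, z_N, there exists k with M+1 ≤ k ≤ M+N such that |z_1^k + ⋯ + z_N^k| ≥ c_N · M^{-N} · max_j |z_j|^k, where c_N > 0 depends only on N. -/
/-!
Normalize so that the largest modulus is attained at `z j₀ = 1`. Simultaneous Dirichlet
approximation on the torus `(ℝ/2πℤ)^N` gives an exponent `K ∈ [M+1, 6^N (M+1)]` putting every
angle `K · arg z_j` within `π/3` of `0`, so `Re z_j^K ≥ |z_j|^K / 2` and `|S_K| ≥ 1/2`.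
On the other hand, for `|z_j| ≤ 1` the monomial `x^n` agrees on `{z_1, …, z_N}` with a polynomial
of degree `< N` whose coefficients are at most `(2n+1)^N`; it is built one node `a` at a time from
`x^n - a^n = (x - a) ∑ a^(n-1-i) x^i`. Multiplying by `z_j^(M+1)` and summing over `j` writes `S_K`
as a combination of `S_(M+1), …, S_(M+N)` with coefficients `O_N(M^N)`, so one of these is
`≫_N M^(-N)`.
-/

open Polynomial Finset MeasureTheory Metric Real

theorem Polynomial.norm_coeff_X_sub_C_mul_le {R : Type*} [SeminormedRing R] {p : R[X]} {a : R}
    (ha : ‖a‖ ≤ 1) {B : ℝ} (hp : ∀ i, ‖p.coeff i‖ ≤ B) (k : ℕ) :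
    ‖((X - C a) * p).coeff k‖ ≤ 2 * B := by
  have hB : 0 ≤ B := (norm_nonneg _).trans (hp 0)
  have hap : ∀ i, ‖a * p.coeff i‖ ≤ B := fun i =>
    ((norm_mul_le _ _).trans (mul_le_of_le_one_left (norm_nonneg _) ha)).trans (hp i)
  cases k with
  | zero =>
    simp only [mul_coeff_zero, coeff_sub, coeff_X_zero, coeff_C_zero, zero_sub, neg_mul, norm_neg]
    linarith [hap 0]
  | succ k =>
    rw [coeff_X_sub_C_mul]
    linarith [norm_sub_le (p.coeff k) (a * p.coeff (k + 1)), hp k, hap (k + 1)]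

theorem Polynomial.exists_natDegree_lt_forall_eval_eq_pow {R : Type*} [NormedCommRing R]
    [NormOneClass R] {ι : Type*} {s : Finset ι} (hs : s.Nonempty) (z : ι → R)
    (hz : ∀ j ∈ s, ‖z j‖ ≤ 1) (n : ℕ) :
    ∃ p : R[X], p.natDegree < #s ∧ (∀ i, ‖p.coeff i‖ ≤ (2 * n + 1) ^ #s) ∧
      ∀ j ∈ s, p.eval (z j) = z j ^ n := by
  induction hs using Finset.Nonempty.cons_induction generalizing n with
  | singleton a =>
    have ha1 (m : ℕ) : ‖z a ^ m‖ ≤ 1 :=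
      (norm_pow_le _ _).trans (pow_le_one₀ (norm_nonneg _) (hz a (mem_singleton_self a)))
    refine ⟨C (z a ^ n), by rw [natDegree_C]; simp, fun i => ?_, by simp⟩
    rw [coeff_C, card_singleton, pow_one]
    split_ifs
    · exact (ha1 n).trans (by linarith [n.cast_nonneg (α := ℝ)])
    · rw [norm_zero]; positivity
  | cons a s ha hs ih =>
    have ha1 (m : ℕ) : ‖z a ^ m‖ ≤ 1 :=
      (norm_pow_le _ _).trans (pow_le_one₀ (norm_nonneg _) (hz a (mem_cons_self a s)))
    choose q hq_deg hq_coeff hq_eval using ih fun j hj => hz j (mem_cons_of_mem hj)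
    set r : R[X] := ∑ i ∈ range n, C (z a ^ (n - 1 - i)) * q i
    have hr_coeff : ∀ k, ‖r.coeff k‖ ≤ n * (2 * n + 1) ^ #s := fun k => by
      simp only [r, finsetSum_coeff, coeff_C_mul]
      refine (norm_sum_le _ _).trans ?_
      calc ∑ i ∈ range n, ‖z a ^ (n - 1 - i) * (q i).coeff k‖
          ≤ ∑ i ∈ range n, ((2 * n + 1 : ℝ) ^ #s) := sum_le_sum fun i hi => by
            refine ((norm_mul_le _ _).trans (mul_le_of_le_one_left (norm_nonneg _) (ha1 _))).trans
              ((hq_coeff i k).trans ?_)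
            gcongr
            exact_mod_cast (mem_range.1 hi).le
        _ = n * (2 * n + 1) ^ #s := by simp
    refine ⟨(X - C (z a)) * r + C (z a ^ n), ?_, fun k => ?_, fun j hj => ?_⟩
    · have hr_deg : r.natDegree ≤ #s - 1 := natDegree_sum_le_of_forall_le _ _ fun i _ =>
        (natDegree_C_mul_le _ _).trans (by have := hq_deg i; omega)
      have hmul := natDegree_mul_le (p := X - C (z a)) (q := r)
      have hX := natDegree_X_sub_C_le (z a)
      have hs1 := hs.card_pos
      rw [card_cons]
      refine (natDegree_add_le _ _).trans_lt ?_
      rw [natDegree_C]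
      omega
    · rw [coeff_add, card_cons, pow_succ]
      have h1 : (1 : ℝ) ≤ (2 * n + 1) ^ #s := one_le_pow₀ (by linarith [n.cast_nonneg (α := ℝ)])
      calc ‖((X - C (z a)) * r).coeff k + (C (z a ^ n)).coeff k‖
          ≤ 2 * (n * (2 * n + 1) ^ #s) + 1 := by
            refine (norm_add_le _ _).trans
              (add_le_add (norm_coeff_X_sub_C_mul_le (by simpa using ha1 1) hr_coeff k) ?_)
            rw [coeff_C]
            split_ifs
            · exact ha1 n
            · simp
        _ ≤ (2 * n + 1) ^ #s * (2 * n + 1) := by nlinarith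
    · simp only [eval_add, eval_mul, eval_sub, eval_X, eval_C]
      rcases mem_cons.1 hj with rfl | hj
      · simp
      · have : r.eval (z j) = ∑ i ∈ range n, z j ^ i * z a ^ (n - 1 - i) := by
          simp only [r, eval_finsetSum, eval_mul, eval_C, hq_eval _ j hj, mul_comm (z a ^ _)]
        rw [this, mul_comm, geom_sum₂_mul, sub_add_cancel]

theorem exists_norm_sum_pow_add_le {R : Type*} [NormedCommRing R] [NormOneClass R]
    {ι : Type*} [Fintype ι] [Nonempty ι] (z : ι → R) (hz : ∀ j, ‖z j‖ ≤ 1) (L n : ℕ) :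
    ∃ k, L ≤ k ∧ k < L + Fintype.card ι ∧
      ‖∑ j, z j ^ (L + n)‖ ≤ Fintype.card ι * (2 * n + 1) ^ Fintype.card ι * ‖∑ j, z j ^ k‖ := by
  set m := Fintype.card ι
  obtain ⟨p, hp_deg, hp_coeff, hp_eval⟩ :=
    exists_natDegree_lt_forall_eval_eq_pow univ_nonempty z (fun j _ => hz j) n
  rw [card_univ] at hp_deg hp_coeff
  obtain ⟨i₀, hi₀, hmax⟩ := exists_max_image (range m) (fun i => ‖∑ j, z j ^ (L + i)‖)
    (nonempty_range_iff.2 Fintype.card_ne_zero)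
  refine ⟨L + i₀, le_self_add, by simpa using hi₀, ?_⟩
  have hsum : ∑ j, z j ^ (L + n) = ∑ i ∈ range m, p.coeff i * ∑ j, z j ^ (L + i) := by
    simp_rw [mul_sum, pow_add, ← hp_eval _ (mem_univ _), eval_eq_sum_range' hp_deg, mul_sum]
    rw [sum_comm]
    exact sum_congr rfl fun j _ => sum_congr rfl fun i _ => by ring
  calc ‖∑ j, z j ^ (L + n)‖
      ≤ ∑ i ∈ range m, ‖p.coeff i‖ * ‖∑ j, z j ^ (L + i)‖ := by
        rw [hsum]; exact (norm_sum_le _ _).trans (sum_le_sum fun i _ => norm_mul_le _ _)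
    _ ≤ ∑ i ∈ range m, (2 * n + 1 : ℝ) ^ m * ‖∑ j, z j ^ (L + i₀)‖ :=
        sum_le_sum fun i hi => mul_le_mul (hp_coeff i) (hmax i hi) (norm_nonneg _) (by positivity)
    _ = m * (2 * n + 1) ^ m * ‖∑ j, z j ^ (L + i₀)‖ := by simp [mul_assoc]

theorem AddCircle.exists_forall_norm_nsmul_le {ι : Type*} [Fintype ι] {T : ℝ} [hT : Fact (0 < T)]
    (ξ : ι → AddCircle T) {m : ℕ} (hm : 0 < m) :
    ∃ q ∈ Set.Icc 1 (m ^ Fintype.card ι), ∀ i, ‖q • ξ i‖ ≤ T / m := by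
  have hball : volume (closedBall (0 : ι → AddCircle T) (T / m / 2)) =
      ENNReal.ofReal (T / m) ^ Fintype.card ι := by
    rw [MeasureTheory.volume_pi_closedBall _ (by have := hT.out; positivity)]
    simp only [AddCircle.volume_closedBall, Finset.prod_const, Finset.card_univ]
    rw [mul_div_cancel₀ _ two_ne_zero,
      min_eq_right (div_le_self hT.out.le (by exact_mod_cast hm))]
  obtain ⟨q, hq, hnorm⟩ := NormedAddCommGroup.exists_norm_nsmul_le (μ := volume) ξ
    (pow_pos hm (Fintype.card ι)) (T / m) (by
      have hT' : ENNReal.ofReal T = m * ENNReal.ofReal (T / m) := by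
        rw [← ENNReal.ofReal_natCast, ← ENNReal.ofReal_mul (Nat.cast_nonneg m),
          mul_div_cancel₀ _ (by exact_mod_cast hm.ne')]
      rw [hball, volume_pi, Measure.pi_univ]
      simp only [AddCircle.measure_univ, Finset.prod_const, Finset.card_univ]
      rw [hT', mul_pow, nsmul_eq_mul]
      push_cast
      gcongr
      exact le_self_add)
  exact ⟨q, hq, fun i => (norm_le_pi_norm (q • ξ) i).trans hnorm⟩

theorem Real.Angle.half_le_cos_of_norm_le {θ : Real.Angle} (hθ : ‖θ‖ ≤ π / 3) :
    1 / 2 ≤ θ.cos := by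
  have hnorm : ‖(θ.toReal : Real.Angle)‖ = |θ.toReal| :=
    (AddCircle.norm_coe_eq_abs_iff _ two_pi_pos.ne').2 (by
      rw [abs_of_pos two_pi_pos]; linarith [θ.abs_toReal_le_pi])
  rw [← θ.coe_toReal, hnorm] at hθ
  rw [← θ.coe_toReal, Real.Angle.cos_coe, ← Real.cos_abs, ← Real.cos_pi_div_three]
  exact Real.cos_le_cos_of_nonneg_of_le_pi (abs_nonneg _) (by linarith [pi_pos]) hθ

theorem Complex.exists_forall_norm_pow_le_two_mul_re_pow {ι : Type*} [Fintype ι] (z : ι → ℂ)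
    (T : ℕ) : ∃ K, T ≤ K ∧ K ≤ 6 ^ Fintype.card ι * T ∧ ∀ j, ‖z j‖ ^ K ≤ 2 * (z j ^ K).re := by
  have : Fact (0 < 2 * π) := ⟨two_pi_pos⟩
  obtain ⟨q, ⟨hq1, hq⟩, hnorm⟩ := AddCircle.exists_forall_norm_nsmul_le
    (fun j => (T • (arg (z j) : Real.Angle) : AddCircle (2 * π))) (by norm_num : 0 < 6)
  refine ⟨q * T, Nat.le_mul_of_pos_left T hq1, Nat.mul_le_mul_right T hq, fun j => ?_⟩
  have hcos : 1 / 2 ≤ Real.cos (arg (z j ^ (q * T))) := by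
    rw [← Real.Angle.cos_coe, arg_pow_coe_angle, mul_nsmul']
    exact Real.Angle.half_le_cos_of_norm_le ((hnorm j).trans_eq (by ring))
  rw [← norm_mul_cos_arg, norm_pow]
  nlinarith [pow_nonneg (norm_nonneg (z j)) (q * T)]

theorem Complex.exists_forall_norm_pow_le_two_mul_norm_sum_pow {ι : Type*} [Fintype ι]
    (z : ι → ℂ) (T : ℕ) :
    ∃ K, T ≤ K ∧ K ≤ 6 ^ Fintype.card ι * T ∧ ∀ j, ‖z j‖ ^ K ≤ 2 * ‖∑ i, z i ^ K‖ := by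
  obtain ⟨K, hTK, hKT, hre⟩ := exists_forall_norm_pow_le_two_mul_re_pow z T
  refine ⟨K, hTK, hKT, fun j => ?_⟩
  calc ‖z j‖ ^ K ≤ 2 * (z j ^ K).re := hre j
    _ ≤ 2 * ∑ i, (z i ^ K).re := by
        gcongr
        refine single_le_sum (f := fun i => (z i ^ K).re) (fun i _ => ?_) (mem_univ j)
        nlinarith [hre i, pow_nonneg (norm_nonneg (z i)) K]
    _ ≤ 2 * ‖∑ i, z i ^ K‖ := by rw [← re_sum]; gcongr; exact re_le_norm _

-- `2` comes from `|S_K| ≥ 1/2`, and `N * (4 * 6 ^ N * M) ^ N` bounds the transport factor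
-- `N * (2 * n + 1) ^ N` for `n < K ≤ 6 ^ N * (M + 1)`.
noncomputable def turanConst (N : ℕ) : ℝ := (2 * N * (4 * 6 ^ N) ^ N)⁻¹

theorem turanConst_pos {N : ℕ} (hN : 0 < N) : 0 < turanConst N := by
  unfold turanConst; positivity

theorem exists_turanConst_le_norm_sum_pow {ι : Type*} [Fintype ι] (z : ι → ℂ)
    (hz : ∀ j, ‖z j‖ ≤ 1) {j₀ : ι} (hj₀ : z j₀ = 1) {M : ℕ} (hM : 0 < M) :
    ∃ k, M + 1 ≤ k ∧ k ≤ M + Fintype.card ι ∧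
      turanConst (Fintype.card ι) * ((M : ℝ) ^ Fintype.card ι)⁻¹ ≤ ‖∑ j, z j ^ k‖ := by
  have : Nonempty ι := ⟨j₀⟩
  set N := Fintype.card ι
  obtain ⟨K, hMK, hKM, hK⟩ := Complex.exists_forall_norm_pow_le_two_mul_norm_sum_pow z (M + 1)
  obtain ⟨k, hk₁, hk₂, hKk⟩ := exists_norm_sum_pow_add_le z hz (M + 1) (K - (M + 1))
  refine ⟨k, hk₁, by omega, ?_⟩
  have hone : 1 ≤ 2 * ‖∑ j, z j ^ K‖ := by simpa [hj₀] using hK j₀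
  rw [Nat.add_sub_cancel' hMK] at hKk
  have hn : 2 * ((K - (M + 1) : ℕ) : ℝ) + 1 ≤ 4 * 6 ^ N * M := by
    have hM' : (1 : ℝ) ≤ M := by exact_mod_cast hM
    have hKM' : (K : ℝ) ≤ 6 ^ N * (M + 1) := by exact_mod_cast hKM
    rw [Nat.cast_sub hMK]
    push_cast
    nlinarith [pow_pos (by norm_num : (0 : ℝ) < 6) N]
  have hNpos : (0 : ℝ) < N := by exact_mod_cast Fintype.card_pos
  rw [turanConst, ← mul_inv, inv_le_iff_one_le_mul₀' (by positivity)]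
  calc 1 ≤ 2 * ‖∑ j, z j ^ K‖ := hone
    _ ≤ 2 * (N * (2 * ((K - (M + 1) : ℕ) : ℝ) + 1) ^ N * ‖∑ j, z j ^ k‖) := by gcongr
    _ ≤ 2 * (N * (4 * 6 ^ N * M) ^ N * ‖∑ j, z j ^ k‖) := by gcongr
    _ = 2 * N * (4 * 6 ^ N) ^ N * M ^ N * ‖∑ j, z j ^ k‖ := by ring

theorem exists_turanConst_mul_norm_pow_le_norm_sum_pow {ι : Type*} [Fintype ι] (z : ι → ℂ)
    {j₀ : ι} (hj₀ : ∀ j, ‖z j‖ ≤ ‖z j₀‖) {M : ℕ} (hM : 0 < M) :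
    ∃ k, M + 1 ≤ k ∧ k ≤ M + Fintype.card ι ∧
      turanConst (Fintype.card ι) * ((M : ℝ) ^ Fintype.card ι)⁻¹ * ‖z j₀‖ ^ k ≤
        ‖∑ j, z j ^ k‖ := by
  by_cases h₀ : z j₀ = 0
  · have : Nonempty ι := ⟨j₀⟩
    exact ⟨M + 1, le_rfl, by have := Fintype.card_pos (α := ι); omega, by simp [h₀]⟩
  obtain ⟨k, hk₁, hk₂, hk⟩ := exists_turanConst_le_norm_sum_pow (fun j => z j / z j₀)
    (fun j => by rw [norm_div]; exact div_le_one_of_le₀ (hj₀ j) (norm_nonneg _))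
    (div_self h₀) hM
  refine ⟨k, hk₁, hk₂, ?_⟩
  have hsum : ∑ j, z j ^ k = z j₀ ^ k * ∑ j, (z j / z j₀) ^ k := by
    rw [mul_sum]
    exact sum_congr rfl fun j _ => by rw [div_pow, mul_div_cancel₀ _ (pow_ne_zero _ h₀)]
  rw [hsum, norm_mul, norm_pow, mul_comm _ (‖z j₀‖ ^ k)]
  gcongr

/-- Turán's second theorem for power sums: for any positive integers `M, N` and
complex numbers `z₁, …, z_N`, some power sum with exponent `k ∈ [M+1, M+N]`
satisfies `|Σ z_j^k| ≥ c_N · M^{-N} · max_j |z_j|^k`. -/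
theorem turan_power_sum (N : ℕ) (hN : 0 < N) :
    ∃ c : ℝ, 0 < c ∧
      ∀ (M : ℕ), 0 < M → ∀ (z : Fin N → ℂ),
        ∃ k, M + 1 ≤ k ∧ k ≤ M + N ∧
          ∀ j, c * ((M : ℝ) ^ N)⁻¹ * ‖z j‖ ^ k ≤
            ‖∑ j', z j' ^ k‖ := by
  refine ⟨turanConst N, turanConst_pos hN, fun M hM z => ?_⟩
  have : Nonempty (Fin N) := ⟨⟨0, hN⟩⟩
  obtain ⟨j₀, hj₀⟩ := Finite.exists_max fun j => ‖z j‖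
  obtain ⟨k, hk₁, hk₂, hk⟩ := exists_turanConst_mul_norm_pow_le_norm_sum_pow z hj₀ hM
  rw [Fintype.card_fin] at hk₂ hk
  have hc : 0 ≤ turanConst N * ((M : ℝ) ^ N)⁻¹ := by have := turanConst_pos hN; positivity
  exact ⟨k, hk₁, hk₂, fun j =>
    (mul_le_mul_of_nonneg_left (pow_le_pow_left₀ (norm_nonneg _) (hj₀ j) k) hc).trans hk⟩
end

section
/- Let I be a finite set and for each i ∈ I let (α_{i,j})_{j=1}^n be complex numbers with |α_{i,j}| < p^{1/2} for a prime p. Define for i, i' ∈ I the formal power series exp( Σ_{q≥1} ( Σ_j α_{i,j}^q )·conj( Σ_j α_{i',j}^q ) X^q / q ) = Σ_{k≥0} c_{i,i'}(k) X^k. Then for every k ≥ 0 the matrix (c_{i,i'}(k))_{i,i'∈I} is Hermitian positive semidefinite, and moreover for k ≥ 1 and any weights w_i ∈ ℂ, Σ_{i,i'} w_i conj(w_{i'}) c_{i,i'}(k) ≥ (1/k) |Σ_i w_i Σ_j α_{i,j}^k|². -/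
/-!
With `u_q(i) = (∑ⱼ α_{i,j}^q) / √q`, the series `S i i'` is `∑_q u_q(i) conj(u_q(i')) X^q`, so each
coefficient matrix of `S` is the rank-one Gram matrix of `u_q`. The coefficient matrices of an
entrywise product of matrix-valued series are sums of Hadamard products of coefficient matrices,
hence positive semidefinite by the Schur product theorem; so every entrywise power `S^ℓ` has
positive semidefinite coefficient matrices, and `c(k) = ∑_ℓ coeff_k(S^ℓ) / ℓ!` is a nonnegative
combination of them. Dropping all terms but `ℓ = 1` leaves `|∑ᵢ wᵢ u_k(i)|²`, the lower bound.
-/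

open scoped ComplexOrder Nat
open Finset Matrix PowerSeries

section CoeffMatrix

variable {𝕜 I : Type*} [RCLike 𝕜]

noncomputable def coeffMatrix (k : ℕ) (S : I → I → 𝕜⟦X⟧) : Matrix I I 𝕜 :=
  Matrix.of fun i i' => coeff k (S i i')

def CoeffPosSemidef (S : I → I → 𝕜⟦X⟧) : Prop :=
  ∀ k, (coeffMatrix k S).PosSemidef

theorem coeffMatrix_mul (k : ℕ) (S T : I → I → 𝕜⟦X⟧) :
    coeffMatrix k (S * T) = ∑ q ∈ antidiagonal k, coeffMatrix q.1 S ⊙ coeffMatrix q.2 T := by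
  ext i i'
  simp [coeffMatrix, coeff_mul, Matrix.sum_apply]

theorem coeffMatrix_one (k : ℕ) :
    coeffMatrix k (1 : I → I → 𝕜⟦X⟧) = if k = 0 then vecMulVec 1 (star 1) else 0 := by
  ext i i'
  split_ifs with hk <;> simp [coeffMatrix, coeff_one, hk, vecMulVec_apply]

theorem coeffMatrix_gram (u : ℕ → I → 𝕜) (k : ℕ) :
    coeffMatrix k (fun i i' => PowerSeries.mk fun q => u q i * star (u q i')) =
      vecMulVec (u k) (star (u k)) := by
  ext i i'
  simp [coeffMatrix, vecMulVec_apply]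

theorem coeffPosSemidef_one [Finite I] : CoeffPosSemidef (1 : I → I → 𝕜⟦X⟧) := by
  intro k
  rw [coeffMatrix_one]
  split_ifs
  · exact posSemidef_vecMulVec_self_star 1
  · exact .zero

theorem coeffPosSemidef_gram [Finite I] (u : ℕ → I → 𝕜) :
    CoeffPosSemidef (fun i i' => PowerSeries.mk fun q => u q i * star (u q i')) := fun k => by
  rw [coeffMatrix_gram]
  exact posSemidef_vecMulVec_self_star _

theorem CoeffPosSemidef.mul {S T : I → I → 𝕜⟦X⟧} (hS : CoeffPosSemidef S)
    (hT : CoeffPosSemidef T) : CoeffPosSemidef (S * T) := fun k => by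
  rw [coeffMatrix_mul]
  exact posSemidef_sum _ fun q _ => (hS q.1).hadamard (hT q.2)

theorem CoeffPosSemidef.pow [Finite I] {S : I → I → 𝕜⟦X⟧} (hS : CoeffPosSemidef S) (ℓ : ℕ) :
    CoeffPosSemidef (S ^ ℓ) := by
  induction ℓ with
  | zero => exact coeffPosSemidef_one
  | succ ℓ ih => rw [pow_succ]; exact ih.mul hS

end CoeffMatrix

section QuadraticForm

variable {𝕜 n ι : Type*} [RCLike 𝕜] [Fintype n]

theorem sum_sum_mul_star_mul_eq_dotProduct (M : Matrix n n 𝕜) (w : n → 𝕜) :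
    ∑ i, ∑ i', w i * star (w i') * M i i' = w ⬝ᵥ (M *ᵥ star w) := by
  simp only [dotProduct, mulVec, Finset.mul_sum, Pi.star_apply]
  exact sum_congr rfl fun i _ => sum_congr rfl fun i' _ => by ring

theorem dotProduct_vecMulVec_mulVec_star (u w : n → 𝕜) :
    w ⬝ᵥ (vecMulVec u (star u) *ᵥ star w) = ((‖w ⬝ᵥ u‖ ^ 2 : ℝ) : 𝕜) := by
  rw [vecMulVec_mulVec, dotProduct_smul, op_smul_eq_mul, star_dotProduct_star, RCLike.star_def,
    RCLike.mul_conj]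
  norm_cast

theorem Matrix.PosSemidef.dotProduct_mulVec_star_nonneg {M : Matrix n n 𝕜} (hM : M.PosSemidef)
    (w : n → 𝕜) : 0 ≤ w ⬝ᵥ (M *ᵥ star w) := by
  simpa using hM.dotProduct_mulVec_nonneg (star w)

theorem dotProduct_mulVec_star_le_sum {s : Finset ι} {M : ι → Matrix n n 𝕜}
    (hM : ∀ ℓ ∈ s, (M ℓ).PosSemidef) {j : ι} (hj : j ∈ s) (w : n → 𝕜) :
    w ⬝ᵥ (M j *ᵥ star w) ≤ w ⬝ᵥ ((∑ ℓ ∈ s, M ℓ) *ᵥ star w) := by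
  rw [sum_mulVec, dotProduct_sum]
  exact single_le_sum (fun ℓ hℓ => (hM ℓ hℓ).dotProduct_mulVec_star_nonneg w) hj

end QuadraticForm

section PowerSums

variable {I J : Type*} [Fintype J]

noncomputable def normalizedPowerSum (α : I → J → ℂ) (q : ℕ) (i : I) : ℂ :=
  (∑ j, α i j ^ q) / (√q : ℝ)

theorem mul_conj_div_natCast_eq_mul_conj (a b : ℂ) (q : ℕ) :
    a * starRingEnd ℂ b / q = a / (√q : ℝ) * starRingEnd ℂ (b / (√q : ℝ)) := by
  rw [map_div₀, Complex.conj_ofReal, div_mul_div_comm, ← Complex.ofReal_mul,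
    Real.mul_self_sqrt q.cast_nonneg, Complex.ofReal_natCast]

theorem mk_powerSum_mul_conj_eq_gram (α : I → J → ℂ) (i i' : I) :
    (PowerSeries.mk fun q => if q = 0 then 0
      else ((∑ j, α i j ^ q) * starRingEnd ℂ (∑ j, α i' j ^ q)) / (q : ℂ)) =
      PowerSeries.mk fun q => normalizedPowerSum α q i * star (normalizedPowerSum α q i') := by
  ext q
  -- at `q = 0` the `else` branch is already `0`: division by zero
  rw [coeff_mk, coeff_mk, ite_eq_right_iff.2 fun hq => by simp [hq],
    mul_conj_div_natCast_eq_mul_conj]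
  rfl

theorem norm_dotProduct_normalizedPowerSum_sq [Fintype I] (α : I → J → ℂ) (w : I → ℂ) (k : ℕ) :
    ‖w ⬝ᵥ normalizedPowerSum α k‖ ^ 2 = 1 / (k : ℝ) * ‖∑ i, w i * ∑ j, α i j ^ k‖ ^ 2 := by
  have hsum : w ⬝ᵥ normalizedPowerSum α k = (∑ i, w i * ∑ j, α i j ^ k) / (√k : ℝ) := by
    simp only [dotProduct, normalizedPowerSum, sum_div, mul_div_assoc]
  rw [hsum, norm_div, Complex.norm_real, Real.norm_of_nonneg (Real.sqrt_nonneg _), div_pow,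
    Real.sq_sqrt k.cast_nonneg, one_div_mul_eq_div]

end PowerSums

theorem local_rankin_selberg_nonneg_definite_general {I : Type*} [Fintype I]
    (n : ℕ) (α : I → Fin n → ℂ)
    (S : I → I → PowerSeries ℂ)
    (hS : ∀ i i', S i i' = PowerSeries.mk fun q =>
      if q = 0 then 0
      else ((∑ j, α i j ^ q) * starRingEnd ℂ (∑ j, α i' j ^ q)) / (q : ℂ))
    (c : I → I → ℕ → ℂ)
    (hc : ∀ i i' k, c i i' k =
      ∑ ℓ ∈ Finset.range (k + 1),
        (PowerSeries.coeff k ((S i i') ^ ℓ)) / (Nat.factorial ℓ : ℂ)) :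
    (∀ k, (Matrix.of fun i i' => c i i' k).PosSemidef) ∧
    (∀ k : ℕ, 1 ≤ k → ∀ w : I → ℂ,
      (1 / (k : ℝ)) * ‖∑ i, w i * ∑ j, α i j ^ k‖ ^ 2 ≤
        (∑ i, ∑ i', w i * starRingEnd ℂ (w i') * c i i' k).re) := by
  set u := normalizedPowerSum α
  have hSu : S = fun i i' => mk fun q => u q i * star (u q i') :=
    funext₂ fun i i' => (hS i i').trans (mk_powerSum_mul_conj_eq_gram α i i')
  have hcM : ∀ k, Matrix.of (fun i i' => c i i' k) =
      ∑ ℓ ∈ range (k + 1), (ℓ ! : ℂ)⁻¹ • coeffMatrix k (S ^ ℓ) := fun k => by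
    ext i i'
    simp [hc, coeffMatrix, Matrix.sum_apply, div_eq_inv_mul]
  have hterm : ∀ k ℓ, ((ℓ ! : ℂ)⁻¹ • coeffMatrix k (S ^ ℓ)).PosSemidef := fun k ℓ =>
    ((hSu ▸ coeffPosSemidef_gram u).pow ℓ k).smul (by simp)
  refine ⟨fun k => hcM k ▸ posSemidef_sum _ fun ℓ _ => hterm k ℓ, fun k hk w => ?_⟩
  have hbound : ((1 / (k : ℝ) * ‖∑ i, w i * ∑ j, α i j ^ k‖ ^ 2 : ℝ) : ℂ) ≤
      ∑ i, ∑ i', w i * starRingEnd ℂ (w i') * c i i' k :=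
    calc ((1 / (k : ℝ) * ‖∑ i, w i * ∑ j, α i j ^ k‖ ^ 2 : ℝ) : ℂ)
        = w ⬝ᵥ (((1 ! : ℂ)⁻¹ • coeffMatrix k (S ^ 1)) *ᵥ star w) := by
          rw [Nat.factorial_one, Nat.cast_one, inv_one, one_smul, pow_one, hSu, coeffMatrix_gram,
            dotProduct_vecMulVec_mulVec_star, norm_dotProduct_normalizedPowerSum_sq]
          rfl
      _ ≤ w ⬝ᵥ ((∑ ℓ ∈ range (k + 1), (ℓ ! : ℂ)⁻¹ • coeffMatrix k (S ^ ℓ)) *ᵥ star w) :=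
          dotProduct_mulVec_star_le_sum (fun ℓ _ => hterm k ℓ) (mem_range.2 (by omega)) w
      _ = ∑ i, ∑ i', w i * starRingEnd ℂ (w i') * c i i' k := by
          rw [← hcM, ← sum_sum_mul_star_mul_eq_dotProduct]
          rfl
  simpa only [Complex.ofReal_re] using (Complex.le_def.1 hbound).1

/-- Local computation at an unramified prime: the power-series coefficients of
`exp( Σ_{q≥1} (Σ_j α_{i,j}^q) conj(Σ_j α_{i',j}^q) X^q / q )` form positive
semidefinite Hermitian matrices, with the explicit lower bound
`Σ_{i,i'} w_i conj(w_{i'}) c_{i,i'}(k) ≥ (1/k) |Σ_i w_i Σ_j α_{i,j}^k|²`. -/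
theorem local_rankin_selberg_nonneg_definite {I : Type*} [Fintype I]
    (p : ℕ) (hp : p.Prime) (n : ℕ) (α : I → Fin n → ℂ)
    (hα : ∀ i j, ‖α i j‖ < Real.sqrt p)
    (S : I → I → PowerSeries ℂ)
    (hS : ∀ i i', S i i' = PowerSeries.mk fun q =>
      if q = 0 then 0
      else ((∑ j, α i j ^ q) * starRingEnd ℂ (∑ j, α i' j ^ q)) / (q : ℂ))
    (c : I → I → ℕ → ℂ)
    (hc : ∀ i i' k, c i i' k =
      ∑ ℓ ∈ Finset.range (k + 1),
        (PowerSeries.coeff k ((S i i') ^ ℓ)) / (Nat.factorial ℓ : ℂ)) :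
    (∀ k, (Matrix.of fun i i' => c i i' k).PosSemidef) ∧
    (∀ k : ℕ, 1 ≤ k → ∀ w : I → ℂ,
      (1 / (k : ℝ)) * ‖∑ i, w i * ∑ j, α i j ^ k‖ ^ 2 ≤
        (∑ i, ∑ i', w i * starRingEnd ℂ (w i') * c i i' k).re) :=
  local_rankin_selberg_nonneg_definite_general n α S hS c hc
end

section
/- Let s, z be complex numbers with Re s ≤ C, Re z ≤ C, and Re(1 - s + z) ≥ ε > 0, and suppose additionally Re s ≥ -C. Then |Γ_ℝ(1 - s + conj(z)) / Γ_ℝ(s + z)| ≪_{ε,C} (1 + |Im(s + z)|)^{1/2 - Re s}, where Γ_ℝ(w) = π^{-w/2} Γ(w/2). -/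
/-!
With `q = (s + z) / 2` and `δ = 1/2 - Re s`, the argument `(1 - s + conj z) / 2` is the conjugate
of `q + δ`, so the quotient has norm `π^{-δ} ‖Γ(q + δ)‖ / ‖Γ(q)‖`, and the claim becomes
`‖Γ(q + δ)‖ ≪ (1 + |Im q|)^δ ‖Γ(q)‖` uniformly for bounded `Re q`, `δ` and `Re(q + δ) ≥ ε/2`.

Write `q + δ + j = q + N + θ` with `j, N ∈ ℕ`, `0 ≤ θ ≤ 1` and `Re(q + N) ≥ 2`. The functional
equation passes from `q + δ` to `q + δ + j` and from `q` to `q + N`, each step costing a factor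
comparable to `1 + |Im q|`. The fractional step `θ` is a complex form of Wendel's inequality,
`‖Γ(w + θ)‖ / Γ(Re w + θ) ≤ (1 + |Im w|)^θ ‖Γ(w)‖ / Γ(Re w)` for `Re w ≥ 2`: in Euler's product
for `Γ` it reduces to `∑ⱼ (g(x + j) - g(x + j + θ)) ≤ θ g(x - 1)` for the convex decreasing
function `g(u) = log (1 + y² / u²)`, which follows by comparing slopes and telescoping.
-/

open Real Filter Topology Finset ComplexConjugate

lemma hasDerivAt_log_one_add_sq_div_sq (y : ℝ) {u : ℝ} (hu : 0 < u) :
    HasDerivAt (fun u => log (1 + y ^ 2 / u ^ 2)) (-(2 * y ^ 2 / (u * (u ^ 2 + y ^ 2)))) u := by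
  have hsq : HasDerivAt (fun u : ℝ => u ^ 2) (2 * u) u := by simpa using hasDerivAt_pow 2 u
  have h := ((hsq.inv (by positivity)).const_mul (y ^ 2)).const_add 1
  simp only [Pi.inv_apply, ← div_eq_mul_inv] at h
  convert h.log (by positivity) using 1
  field_simp

lemma convexOn_log_one_add_sq_div_sq (y : ℝ) :
    ConvexOn ℝ (Set.Ioi 0) (fun u => log (1 + y ^ 2 / u ^ 2)) := by
  have hderiv : ∀ u ∈ Set.Ioi (0 : ℝ), HasDerivAt (fun u => log (1 + y ^ 2 / u ^ 2))
      (-(2 * y ^ 2 / (u * (u ^ 2 + y ^ 2)))) u := fun u hu => hasDerivAt_log_one_add_sq_div_sq y hu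
  refine MonotoneOn.convexOn_of_deriv (convex_Ioi 0)
    (fun u hu => (hderiv u hu).continuousAt.continuousWithinAt)
    (by rw [interior_Ioi]; exact fun u hu => (hderiv u hu).differentiableAt.differentiableWithinAt)
    ?_
  rw [interior_Ioi]
  intro a (ha : 0 < a) b (hb : 0 < b) hab
  rw [(hderiv a ha).deriv, (hderiv b hb).deriv, neg_le_neg_iff]
  exact div_le_div_of_nonneg_left (by positivity) (by positivity) (by gcongr)

lemma ConvexOn.mul_sub_le_sub {s : Set ℝ} {g : ℝ → ℝ} (hg : ConvexOn ℝ s g) {b θ : ℝ}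
    (hb : b - 1 ∈ s) (hbθ : b + θ ∈ s) (hθ : 0 ≤ θ) :
    θ * (g b - g (b - 1)) ≤ g (b + θ) - g b := by
  rcases hθ.eq_or_lt with rfl | hθ
  · simp
  have h := hg.slope_mono_adjacent (y := b) hb hbθ (by linarith) (by linarith)
  rwa [sub_sub_cancel, div_one, add_sub_cancel_left, le_div_iff₀ hθ, mul_comm] at h

lemma sum_log_one_add_sq_div_sq_sub_le (y : ℝ) {x θ : ℝ} (hx : 2 ≤ x) (hθ : 0 ≤ θ) (n : ℕ) :
    ∑ j ∈ range n, (log (1 + y ^ 2 / (x + j) ^ 2) - log (1 + y ^ 2 / (x + θ + j) ^ 2)) ≤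
      θ * log (1 + y ^ 2) := by
  set g : ℝ → ℝ := fun u => log (1 + y ^ 2 / u ^ 2)
  set f : ℕ → ℝ := fun k => g (x - 1 + k)
  have hstep : ∀ j ∈ range n, g (x + j) - g (x + θ + j) ≤ θ * (f j - f (j + 1)) := by
    intro j _
    have hj : (0 : ℝ) ≤ j := j.cast_nonneg
    have h := (convexOn_log_one_add_sq_div_sq y).mul_sub_le_sub (b := x + j)
      (show x + j - 1 ∈ Set.Ioi 0 by simp only [Set.mem_Ioi]; linarith)
      (show x + j + θ ∈ Set.Ioi 0 by simp only [Set.mem_Ioi]; linarith) hθ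
    simp only [f, Nat.cast_succ]
    rw [show x - 1 + j = x + j - 1 by ring, show x - 1 + (j + 1) = x + j by ring,
      show x + θ + j = x + j + θ by ring]
    linarith
  have hg_nonneg : 0 ≤ f n := log_nonneg (by simp only [le_add_iff_nonneg_right]; positivity)
  have hg_le : f 0 ≤ log (1 + y ^ 2) := by
    have h1 : 1 ≤ (x - 1) ^ 2 := by nlinarith
    refine log_le_log (by positivity) ?_
    simp only [Nat.cast_zero, add_zero, add_le_add_iff_left]
    exact div_le_self (sq_nonneg y) h1
  calc _ ≤ ∑ j ∈ range n, θ * (f j - f (j + 1)) := sum_le_sum hstep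
    _ = θ * (f 0 - f n) := by rw [← mul_sum, sum_range_sub']
    _ ≤ θ * log (1 + y ^ 2) := by gcongr; linarith

lemma prod_one_add_sq_div_sq_le (y : ℝ) {x θ : ℝ} (hx : 2 ≤ x) (hθ : 0 ≤ θ) (n : ℕ) :
    ∏ j ∈ range n, (1 + y ^ 2 / (x + j) ^ 2) ≤
      (1 + y ^ 2) ^ θ * ∏ j ∈ range n, (1 + y ^ 2 / (x + θ + j) ^ 2) := by
  have hpos : ∀ t : ℝ, ∀ j : ℕ, 0 < 1 + y ^ 2 / (t + j) ^ 2 := fun t j => by positivity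
  rw [← log_le_log_iff (prod_pos fun j _ => hpos x j) (by positivity),
    log_mul (by positivity) (prod_pos fun j _ => hpos _ j).ne', log_rpow (by positivity),
    log_prod fun j _ => (hpos x j).ne', log_prod fun j _ => (hpos _ j).ne']
  have := sum_log_one_add_sq_div_sq_sub_le y hx hθ n
  rw [sum_sub_distrib] at this
  linarith

lemma one_add_abs_rpow_le_two_rpow_mul {y δ D : ℝ} (hδ : |δ| ≤ D) :
    (1 + |y|) ^ δ ≤ 2 ^ D * (1 + |2 * y|) ^ δ := by
  have h2y : |2 * y| = 2 * |y| := by rw [abs_mul, abs_two]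
  rcases le_total 0 δ with hδ₀ | hδ₀
  · calc (1 + |y|) ^ δ ≤ 1 * (1 + |2 * y|) ^ δ := by
          rw [one_mul, h2y]; gcongr; linarith [abs_nonneg y]
      _ ≤ 2 ^ D * (1 + |2 * y|) ^ δ := by
          gcongr; exact one_le_rpow one_le_two (by linarith [abs_nonneg δ])
  · calc (1 + |y|) ^ δ = 2 ^ (-δ) * (2 * (1 + |y|)) ^ δ := by
          rw [mul_rpow zero_le_two (by positivity), ← mul_assoc, ← rpow_add two_pos]; simp
      _ ≤ 2 ^ D * (1 + |2 * y|) ^ δ := by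
          refine mul_le_mul (rpow_le_rpow_of_exponent_le one_le_two ?_)
            (rpow_le_rpow_of_nonpos (by positivity) (by rw [h2y]; linarith) hδ₀)
            (by positivity) (by positivity)
          linarith [abs_of_nonpos hδ₀]

namespace Complex

lemma sq_re_div_norm (u : ℂ) (hu : u.re ≠ 0) : (u.re / ‖u‖) ^ 2 = (1 + u.im ^ 2 / u.re ^ 2)⁻¹ := by
  rw [div_pow, Complex.sq_norm, normSq_apply]
  field_simp

lemma sq_prod_re_div_norm (w : ℂ) {t : ℝ} (ht : 0 < w.re + t) (n : ℕ) :
    (∏ j ∈ range n, ((w.re + t + j) / ‖w + t + j‖)) ^ 2 =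
      (∏ j ∈ range n, (1 + w.im ^ 2 / (w.re + t + j) ^ 2))⁻¹ := by
  rw [← prod_pow, ← prod_inv_distrib]
  refine prod_congr rfl fun j _ => ?_
  have hre : (w + t + j).re = w.re + t + j := by simp
  have him : (w + t + j).im = w.im := by simp
  rw [← hre, ← him, sq_re_div_norm _ (by rw [hre]; positivity)]

lemma prod_re_div_norm_le (w : ℂ) (hw : 2 ≤ w.re) {θ : ℝ} (hθ : 0 ≤ θ) (n : ℕ) :
    ∏ j ∈ range n, ((w.re + θ + j) / ‖w + θ + j‖) ≤
      (1 + |w.im|) ^ θ * ∏ j ∈ range n, ((w.re + j) / ‖w + j‖) := by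
  set c := (1 + |w.im|) ^ θ
  set A : ℝ → ℝ := fun t => ∏ j ∈ range n, (1 + w.im ^ 2 / (w.re + t + j) ^ 2)
  have hA : ∀ t, 0 < A t := fun t => prod_pos fun j _ => by positivity
  have hc : (1 + w.im ^ 2) ^ θ ≤ c ^ 2 := by
    rw [sq c, ← mul_rpow (by positivity) (by positivity)]
    gcongr
    nlinarith [abs_nonneg w.im, sq_abs w.im]
  have hAθ : A 0 ≤ c ^ 2 * A θ := by
    simpa [A] using (prod_one_add_sq_div_sq_le w.im hw hθ n).trans (by gcongr)
  refine le_of_pow_le_pow_left₀ two_ne_zero (by positivity) ?_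
  have h0 : (∏ j ∈ range n, ((w.re + j) / ‖w + j‖)) ^ 2 = (A 0)⁻¹ := by
    simpa [A] using sq_prod_re_div_norm w (t := 0) (by linarith) n
  rw [sq_prod_re_div_norm w (by linarith) n, mul_pow, h0]
  calc (A θ)⁻¹ = c ^ 2 * (c ^ 2 * A θ)⁻¹ := by
        rw [mul_inv, ← mul_assoc, mul_inv_cancel₀ (by positivity), one_mul]
    _ ≤ c ^ 2 * (A 0)⁻¹ := by gcongr

lemma norm_GammaSeq_div_GammaSeq_re {w : ℂ} (hw : 0 < w.re) {n : ℕ} (hn : n ≠ 0) :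
    ‖GammaSeq w n‖ / Real.GammaSeq w.re n = ∏ j ∈ range (n + 1), ((w.re + j) / ‖w + j‖) := by
  rw [GammaSeq, Real.GammaSeq, norm_div, norm_mul, norm_prod, norm_natCast_cpow_of_pos
    (Nat.pos_of_ne_zero hn), norm_natCast, prod_div_distrib]
  have hre : ∀ j : ℕ, 0 < w.re + j := fun j => by positivity
  have hnorm : ∀ j : ℕ, 0 < ‖w + j‖ := fun j =>
    norm_pos_iff.mpr fun h => (hre j).ne' (by simpa using congrArg re h)
  have : 0 < (n : ℝ) ^ w.re * n.factorial := by positivity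
  have := prod_pos fun j (_ : j ∈ range (n + 1)) => hre j
  have := prod_pos fun j (_ : j ∈ range (n + 1)) => hnorm j
  field_simp

lemma tendsto_prod_re_div_norm (w : ℂ) (hw : 0 < w.re) :
    Tendsto (fun n => ∏ j ∈ range (n + 1), ((w.re + j) / ‖w + j‖)) atTop
      (𝓝 (‖Gamma w‖ / Real.Gamma w.re)) :=
  ((GammaSeq_tendsto_Gamma w).norm.div (Real.GammaSeq_tendsto_Gamma w.re)
    (Real.Gamma_pos_of_pos hw).ne').congr'
    ((eventually_ne_atTop 0).mono fun _ hn => norm_GammaSeq_div_GammaSeq_re hw hn)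

lemma norm_Gamma_add_div_Gamma_re_le (w : ℂ) (hw : 2 ≤ w.re) {θ : ℝ} (hθ : 0 ≤ θ) :
    ‖Gamma (w + θ)‖ / Real.Gamma (w.re + θ) ≤ (1 + |w.im|) ^ θ * (‖Gamma w‖ / Real.Gamma w.re) := by
  have h := tendsto_prod_re_div_norm (w + θ) (by simp; linarith)
  rw [show (w + θ).re = w.re + θ by simp] at h
  exact le_of_tendsto_of_tendsto' h ((tendsto_prod_re_div_norm w (by linarith)).const_mul _)
    fun n => prod_re_div_norm_le w hw hθ (n + 1)

lemma norm_Gamma_add_ofReal_le {w : ℂ} (hw : 2 ≤ w.re) {θ : ℝ} (hθ₀ : 0 ≤ θ) (hθ₁ : θ ≤ 1) :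
    ‖Gamma (w + θ)‖ ≤ w.re * (1 + |w.im|) ^ θ * ‖Gamma w‖ := by
  have hΓ : 0 < Real.Gamma w.re := Real.Gamma_pos_of_pos (by linarith)
  have hΓθ : 0 < Real.Gamma (w.re + θ) := Real.Gamma_pos_of_pos (by linarith)
  have hmono : Real.Gamma (w.re + θ) ≤ w.re * Real.Gamma w.re := by
    rw [← Real.Gamma_add_one (by linarith)]
    exact Real.Gamma_strictMonoOn_Ici.monotoneOn (by simp; linarith) (by simp; linarith)
      (by linarith)
  calc ‖Gamma (w + θ)‖ = ‖Gamma (w + θ)‖ / Real.Gamma (w.re + θ) * Real.Gamma (w.re + θ) := by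
        field_simp
    _ ≤ (1 + |w.im|) ^ θ * (‖Gamma w‖ / Real.Gamma w.re) * (w.re * Real.Gamma w.re) := by
        gcongr
        exact norm_Gamma_add_div_Gamma_re_le w hw hθ₀
    _ = w.re * (1 + |w.im|) ^ θ * ‖Gamma w‖ := by
        field_simp

lemma Gamma_add_nat_eq_prod_mul {w : ℂ} (hw : ∀ m : ℕ, w ≠ -m) (n : ℕ) :
    Gamma (w + n) = (∏ k ∈ range n, (w + k)) * Gamma w := by
  induction n with
  | zero => simp
  | succ n ih =>
    rw [Nat.cast_succ, ← add_assoc, Gamma_add_one _ fun h => hw n (eq_neg_of_add_eq_zero_left h),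
      ih, prod_range_succ]
    ring

lemma half_mul_one_add_abs_im_le_norm {u : ℂ} {c : ℝ} (hc : c ≤ 1) (hcu : c ≤ u.re) :
    c / 2 * (1 + |u.im|) ≤ ‖u‖ := by
  have hre := re_le_norm u
  have him := abs_im_le_norm u
  nlinarith [abs_nonneg u.im]

lemma half_mul_one_add_abs_im_pow_mul_norm_Gamma_le {v : ℂ} {c : ℝ} (hc₀ : 0 < c) (hc₁ : c ≤ 1)
    (hcv : c ≤ v.re) (n : ℕ) :
    (c / 2 * (1 + |v.im|)) ^ n * ‖Gamma v‖ ≤ ‖Gamma (v + n)‖ := by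
  have hv : ∀ m : ℕ, v ≠ -m := fun m h => by
    have := congrArg re h
    simp only [neg_re, natCast_re] at this
    linarith [m.cast_nonneg (α := ℝ)]
  calc (c / 2 * (1 + |v.im|)) ^ n * ‖Gamma v‖
      = (∏ _k ∈ range n, c / 2 * (1 + |v.im|)) * ‖Gamma v‖ := by rw [prod_const, card_range]
    _ ≤ (∏ k ∈ range n, ‖v + k‖) * ‖Gamma v‖ := by
        gcongr with k
        simpa using half_mul_one_add_abs_im_le_norm (u := v + k) hc₁
          (by simp; linarith [k.cast_nonneg (α := ℝ)])
    _ = ‖Gamma (v + n)‖ := by rw [Gamma_add_nat_eq_prod_mul hv, norm_mul, norm_prod]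

lemma norm_Gamma_add_nat_le {q : ℂ} (hq : ∀ m : ℕ, q ≠ -m) (n : ℕ) :
    ‖Gamma (q + n)‖ ≤ ((|q.re| + n) * (1 + |q.im|)) ^ n * ‖Gamma q‖ := by
  rw [Gamma_add_nat_eq_prod_mul hq, norm_mul, norm_prod]
  calc (∏ k ∈ range n, ‖q + k‖) * ‖Gamma q‖
      ≤ (∏ _k ∈ range n, (|q.re| + n) * (1 + |q.im|)) * ‖Gamma q‖ := by
        gcongr with k hk
        have hkn : (k : ℝ) + 1 ≤ n := by exact_mod_cast mem_range.mp hk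
        calc ‖q + k‖ ≤ |(q + k).re| + |(q + k).im| := norm_le_abs_re_add_abs_im _
          _ ≤ |q.re| + k + |q.im| := by
              simp only [add_re, natCast_re, add_im, natCast_im, add_zero]
              gcongr
              exact (abs_add_le _ _).trans (by simp)
          _ ≤ (|q.re| + n) * (1 + |q.im|) := by nlinarith [abs_nonneg q.re, abs_nonneg q.im]
    _ = ((|q.re| + n) * (1 + |q.im|)) ^ n * ‖Gamma q‖ := by rw [prod_const, card_range]

lemma pow_mul_norm_Gamma_add_ofReal_le {q : ℂ} (hq : ∀ m : ℕ, q ≠ -m) {c δ : ℝ} (hc₀ : 0 < c)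
    (hc₁ : c ≤ 1) (hcδ : c ≤ q.re + δ) {j N : ℕ} (hN : 2 ≤ q.re + N) (hjN₀ : N ≤ δ + j)
    (hjN₁ : δ + j ≤ N + 1) :
    (c / 2) ^ j * ‖Gamma (q + δ)‖ ≤
      (q.re + N) * (|q.re| + N) ^ N * (1 + |q.im|) ^ δ * ‖Gamma q‖ := by
  set Y := 1 + |q.im|
  have hY : 0 < Y := by positivity
  set θ : ℝ := δ + j - N
  have hshift : q + δ + j = q + N + θ := by push_cast [θ]; ring
  have hexp : Y ^ θ * Y ^ N = Y ^ δ * Y ^ j := by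
    rw [← rpow_natCast, ← rpow_natCast, ← rpow_add hY, ← rpow_add hY]
    congr 1
    ring
  have hlower := half_mul_one_add_abs_im_pow_mul_norm_Gamma_le hc₀ hc₁ (v := q + δ)
    (by simpa using hcδ) j
  have hupper := norm_Gamma_add_ofReal_le (w := q + N) (by simpa using hN)
    (show 0 ≤ θ by linarith) (show θ ≤ 1 by linarith)
  simp only [add_im, ofReal_im, natCast_im, add_zero, add_re, natCast_re] at hlower hupper
  refine le_of_mul_le_mul_right ?_ (pow_pos hY j)
  calc (c / 2) ^ j * ‖Gamma (q + δ)‖ * Y ^ j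
      = (c / 2 * Y) ^ j * ‖Gamma (q + δ)‖ := by rw [mul_pow]; ring
    _ ≤ ‖Gamma (q + N + θ)‖ := hshift ▸ hlower
    _ ≤ (q.re + N) * Y ^ θ * ‖Gamma (q + N)‖ := hupper
    _ ≤ (q.re + N) * Y ^ θ * (((|q.re| + N) * Y) ^ N * ‖Gamma q‖) := by
        gcongr
        exact norm_Gamma_add_nat_le hq N
    _ = (q.re + N) * (|q.re| + N) ^ N * (Y ^ θ * Y ^ N) * ‖Gamma q‖ := by rw [mul_pow]; ring
    _ = (q.re + N) * (|q.re| + N) ^ N * Y ^ δ * ‖Gamma q‖ * Y ^ j := by rw [hexp]; ring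

lemma exists_norm_Gamma_add_ofReal_le_mul_rpow (B : ℝ) {e : ℝ} (he : 0 < e) :
    ∃ K, 0 < K ∧ ∀ (q : ℂ) (δ : ℝ), |q.re| ≤ B → δ ≤ B → e ≤ q.re + δ → Gamma q ≠ 0 →
      ‖Gamma (q + δ)‖ ≤ K * (1 + |q.im|) ^ δ * ‖Gamma q‖ := by
  obtain ⟨N, hBN⟩ := exists_nat_ge (|B| + 2)
  have hB := le_abs_self B
  have hN : (0 : ℝ) < N := by linarith [abs_nonneg B]
  set c : ℝ := min e 1
  have hc₀ : 0 < c := lt_min he one_pos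
  have hc₁ : c ≤ 1 := min_le_right _ _
  refine ⟨(2 * N) ^ (N + 1) / (c / 2) ^ (2 * N), by positivity, fun q δ hq hδ hqδ hΓ => ?_⟩
  obtain ⟨hq₁, hq₂⟩ := abs_le.mp hq
  set j : ℕ := ⌈(N : ℝ) - δ⌉₊
  have hj : j ≤ 2 * N := Nat.ceil_le.mpr (by push_cast; linarith)
  have hshift := pow_mul_norm_Gamma_add_ofReal_le (q := q) (δ := δ) (j := j) (N := N)
    (fun m h => hΓ (by rw [h]; exact Gamma_neg_nat_eq_zero m)) hc₀ hc₁
    (by linarith [min_le_left e 1]) (by linarith) (by linarith [Nat.le_ceil ((N : ℝ) - δ)])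
    (by linarith [Nat.ceil_lt_add_one (show 0 ≤ (N : ℝ) - δ by linarith)])
  have hconst : (q.re + N) * (|q.re| + N) ^ N ≤ (2 * N) ^ (N + 1) := by
    rw [pow_succ']
    gcongr <;> linarith
  rw [div_mul_eq_mul_div, div_mul_eq_mul_div, le_div_iff₀ (by positivity)]
  calc ‖Gamma (q + δ)‖ * (c / 2) ^ (2 * N) ≤ (c / 2) ^ j * ‖Gamma (q + δ)‖ := by
        rw [mul_comm]
        exact mul_le_mul_of_nonneg_right
          (pow_le_pow_of_le_one (by positivity) (by linarith) hj) (norm_nonneg _)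
    _ ≤ (2 * N) ^ (N + 1) * (1 + |q.im|) ^ δ * ‖Gamma q‖ := by
        refine hshift.trans ?_
        gcongr

lemma norm_Gammaℝ (w : ℂ) : ‖Gammaℝ w‖ = π ^ (-w.re / 2) * ‖Gamma (w / 2)‖ := by
  rw [Gammaℝ_def, norm_mul, norm_cpow_eq_rpow_re_of_pos pi_pos]
  simp

lemma norm_Gammaℝ_conj (w : ℂ) : ‖Gammaℝ (conj w)‖ = ‖Gammaℝ w‖ := by
  rw [norm_Gammaℝ, norm_Gammaℝ, conj_re, show conj w / 2 = conj (w / 2) by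
    rw [map_div₀, map_ofNat], Gamma_conj, norm_conj]

lemma norm_Gammaℝ_add_ofReal_div (w : ℂ) (δ : ℝ) :
    ‖Gammaℝ (w + 2 * δ) / Gammaℝ w‖ = π ^ (-δ) * (‖Gamma (w / 2 + δ)‖ / ‖Gamma (w / 2)‖) := by
  rw [norm_div, norm_Gammaℝ, norm_Gammaℝ, mul_div_mul_comm, ← rpow_sub pi_pos,
    show (w + 2 * δ) / 2 = w / 2 + δ by ring]
  congr 2
  simp
  ring

lemma norm_Gammaℝ_one_sub_add_conj_div (s z : ℂ) :
    ‖Gammaℝ (1 - s + conj z) / Gammaℝ (s + z)‖ =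
      π ^ (-(1 / 2 - s.re)) *
        (‖Gamma ((s + z) / 2 + (1 / 2 - s.re : ℝ))‖ / ‖Gamma ((s + z) / 2)‖) := by
  have hconj : 1 - s + conj z = conj (s + z + 2 * (1 / 2 - s.re : ℝ)) := by
    apply Complex.ext
    · simp
      ring
    · simp
  rw [hconj, norm_div, norm_Gammaℝ_conj, ← norm_div, norm_Gammaℝ_add_ofReal_div]

end Complex

/-- Bound for quotients of Archimedean factors `Γ_ℝ(w) = π^{-w/2} Γ(w/2)`:
for `-C ≤ Re s ≤ C`, `Re z ≤ C`, `Re(1 - s + z) ≥ ε > 0`,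
`|Γ_ℝ(1 - s + conj z) / Γ_ℝ(s + z)| ≪_{ε,C} (1 + |Im(s+z)|)^{1/2 - Re s}`. -/
theorem gammaR_quotient_bound (ε C : ℝ) (hε : 0 < ε) :
    ∃ K : ℝ, 0 < K ∧
      ∀ s z : ℂ, s.re ≤ C → z.re ≤ C → -C ≤ s.re → ε ≤ (1 - s + z).re →
        norm
            (((Real.pi : ℂ) ^ (-(1 - s + starRingEnd ℂ z) / 2) *
                Complex.Gamma ((1 - s + starRingEnd ℂ z) / 2)) /
              ((Real.pi : ℂ) ^ (-(s + z) / 2) * Complex.Gamma ((s + z) / 2))) ≤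
          K * (1 + |(s + z).im|) ^ (1 / 2 - s.re) := by
  obtain ⟨K, hK, hΓ⟩ := Complex.exists_norm_Gamma_add_ofReal_le_mul_rpow (|C| + 1) (half_pos hε)
  refine ⟨π ^ |C| * K * 2 ^ (|C| + 1), by positivity, fun s z hs hz hs' hsz => ?_⟩
  have hC : |C| = C := abs_of_nonneg (by linarith)
  simp only [Complex.sub_re, Complex.add_re, Complex.one_re] at hsz
  rw [← Complex.Gammaℝ_def, ← Complex.Gammaℝ_def, Complex.norm_Gammaℝ_one_sub_add_conj_div, hC]
  set δ : ℝ := 1 / 2 - s.re with hδ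
  set q : ℂ := (s + z) / 2
  have hqre : q.re = (s.re + z.re) / 2 := by simp [q]
  have hqim : (s + z).im = 2 * q.im := by simp [q]; ring
  by_cases hq : Complex.Gamma q = 0
  · rw [hq, norm_zero, div_zero, mul_zero]
    positivity
  have hbound := hΓ q δ (abs_le.mpr ⟨by linarith, by linarith⟩) (by linarith) (by linarith) hq
  calc π ^ (-δ) * (‖Complex.Gamma (q + δ)‖ / ‖Complex.Gamma q‖)
      ≤ π ^ C * (K * (1 + |q.im|) ^ δ) := by
        gcongr
        · linarith [pi_gt_three]
        · linarith
        · exact (div_le_iff₀ (norm_pos_iff.mpr hq)).mpr hbound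
    _ ≤ π ^ C * (K * (2 ^ (C + 1) * (1 + |(s + z).im|) ^ δ)) := by
        rw [hqim]
        gcongr
        exact one_add_abs_rpow_le_two_rpow_mul (abs_le.mpr ⟨by linarith, by linarith⟩)
    _ = π ^ C * K * 2 ^ (C + 1) * (1 + |(s + z).im|) ^ δ := by ring
end
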